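/- arXiv:2305.07925 — 2 statements merged into one kernel-verified Lean document; each statement's English description precedes it below -/
import Mathlib

section
/- If U ⊆ ℂ is a nonempty open connected set symmetric about the origin (i.e., -U = U) and simply connected, then 0 ∈ U. -/
/-!
Suppose `0 ∉ U`. Since `U` is simply connected and locally path connected, the covering map
`z ↦ z ^ 2` of `ℂ \ {0}` lets the inclusion `U → ℂ \ {0}` lift to a continuous square root
`g`. Then `g (-z) ^ 2 = -g z ^ 2`, so by connectedness `g (-z) = c * g z` on `U` for a fixed
`c = ±i`; applying this twice gives `g z = c ^ 2 * g z = -g z`, contradicting `g z ≠ 0`.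
-/

open Function Set

theorem exists_continuousMap_pow_eq {A : Type*} [TopologicalSpace A] [SimplyConnectedSpace A]
    [LocallyPathConnectedSpace A] {n : ℕ} (hn : n ≠ 0) (f : C(A, ℂ)) (hf : ∀ a, f a ≠ 0) :
    ∃ g : C(A, ℂ), ∀ a, g a ^ n = f a := by
  obtain ⟨a₀⟩ := (inferInstance : Nonempty A)
  obtain ⟨g, ⟨-, hg⟩, -⟩ :=
    (isCoveringMapOn_npow n (Nat.cast_ne_zero.mpr hn)).existsUnique_continuousMap_lifts f
      (a₀ := a₀) (Complex.cpow_nat_inv_pow (f a₀) hn) hf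
  exact ⟨g, congrFun hg⟩

theorem Function.Involutive.exists_sq_comp_ne_neg_sq {X : Type*} [TopologicalSpace X]
    [PreconnectedSpace X] [Nonempty X] {ν : X → X} (hν : Involutive ν) (hνc : Continuous ν)
    {g : X → ℂ} (hg : Continuous g) (hg0 : ∀ x, g x ≠ 0) :
    ∃ x, g (ν x) ^ 2 ≠ -g x ^ 2 := by
  by_contra! hsq
  obtain ⟨c, hc, hgν⟩ : ∃ c : ℂ, c ^ 2 = -1 ∧ ∀ x, g (ν x) = c * g x := by
    rcases isPreconnected_univ.eq_or_eq_neg_of_sq_eq (hg.comp hνc).continuousOn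
        (continuous_const.mul hg).continuousOn (f := g ∘ ν) (g := fun x ↦ Complex.I * g x)
        (fun x _ ↦ by simp [mul_pow, hsq]) (fun _ ↦ mul_ne_zero Complex.I_ne_zero (hg0 _))
      with h | h
    · exact ⟨Complex.I, by simp, fun x ↦ h (mem_univ x)⟩
    · exact ⟨-Complex.I, by simp, fun x ↦ by simpa using h (mem_univ x)⟩
  obtain ⟨x⟩ := (inferInstance : Nonempty X)
  have : g x = -g x := by
    calc g x = g (ν (ν x)) := by rw [hν x]
      _ = c ^ 2 * g x := by rw [hgν, hgν]; ring
      _ = -g x := by rw [hc]; ring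
  exact hg0 x (CharZero.eq_neg_self_iff.mp this)

theorem stmt2_general (U : Set ℂ) (hopen : IsOpen U) (hsymm : -U = U)
    (hsc : SimplyConnectedSpace U) :
    (0 : ℂ) ∈ U := by
  by_contra h0
  have := hopen.locallyPathConnectedSpace
  have hU0 : ∀ z : U, (z : ℂ) ≠ 0 := fun z hz ↦ h0 (hz ▸ z.2)
  obtain ⟨g, hg⟩ :=
    exists_continuousMap_pow_eq two_ne_zero ⟨((↑) : U → ℂ), by fun_prop⟩ hU0
  let ν : U → U := fun z ↦ ⟨-z, hsymm.subset (neg_mem_neg.mpr z.2)⟩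
  have hν : Involutive ν := fun z ↦ Subtype.ext (neg_neg _)
  obtain ⟨z, hz⟩ := hν.exists_sq_comp_ne_neg_sq (by fun_prop) g.continuous
    fun z hz ↦ hU0 z (by simpa [hz] using (hg z).symm)
  exact hz (by simp [ν, hg])

/-- A nonempty open connected subset of `ℂ`, symmetric about the origin and
simply connected, must contain `0`. -/
theorem stmt2 (U : Set ℂ) (hne : U.Nonempty) (hopen : IsOpen U)
    (hconn : IsConnected U) (hsymm : -U = U)
    (hsc : SimplyConnectedSpace U) :
    (0 : ℂ) ∈ U :=
  stmt2_general U hopen hsymm hsc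
end

section
/- Let Γ : [0, 1/2] → [0, 1/2] be given by Γ(x) = 3x for 0 ≤ x ≤ 1/6 and Γ(x) = |3x - 1| for 1/6 ≤ x ≤ 1/2. Then for every x ∈ (0, 1/2] there exists n ≥ 0 such that either Γ^n(x) = 1/2 or 1/4 ≤ Γ^n(x) ≤ 5/12. -/
/-- For the length map `Γ` (with `Γ x = 3x` on `[0,1/6]` and `Γ x = |3x-1|` on
`[1/6,1/2]`), every `x ∈ (0,1/2]` eventually reaches `1/2` or lands in
`[1/4, 5/12]` under iteration. -/
theorem stmt10 (Γ : ℝ → ℝ)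
    (hΓ : ∀ x : ℝ, Γ x = if x ≤ 1 / 6 then 3 * x else |3 * x - 1|) :
    ∀ x : ℝ, 0 < x → x ≤ 1 / 2 →
      ∃ n : ℕ, Γ^[n] x = 1 / 2 ∨ (1 / 4 ≤ Γ^[n] x ∧ Γ^[n] x ≤ 5 / 12) := by
  -- Lemma A: starting in (5/12, 1/2), eventually done (distance to 1/2 triples)
  have hA : ∀ N : ℕ, ∀ y : ℝ, 5/12 < y → y < 1/2 → 1/12 < 3^N * (1/2 - y) →
      ∃ n : ℕ, Γ^[n] y = 1/2 ∨ (1/4 ≤ Γ^[n] y ∧ Γ^[n] y ≤ 5/12) := by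
    intro N
    induction N with
    | zero => intro y h1 h2 h3; norm_num at h3; linarith
    | succ N ih =>
      intro y h1 h2 h3
      have hy6 : ¬ y ≤ 1/6 := by linarith
      have hΓy : Γ y = 3*y - 1 := by
        rw [hΓ y, if_neg hy6, abs_of_nonneg (by linarith)]
      by_cases hc : Γ y ≤ 5/12
      · exact ⟨1, Or.inr ⟨by rw [Function.iterate_one, hΓy]; linarith,
          by rwa [Function.iterate_one]⟩⟩
      · have h3' : 1/12 < 3^N * (1/2 - Γ y) := by
          rw [hΓy]
          have : (3:ℝ)^N * (1/2 - (3*y-1)) = 3^(N+1) * (1/2 - y) := by ring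
          linarith [this ▸ h3]
        obtain ⟨n, hn⟩ := ih (Γ y) (by linarith) (by rw [hΓy]; linarith) h3'
        exact ⟨n+1, by rwa [Function.iterate_succ_apply]⟩
  -- Lemma C: starting in (1/6, 1/2], eventually done
  have hC : ∀ y : ℝ, 1/6 < y → y ≤ 1/2 →
      ∃ n : ℕ, Γ^[n] y = 1/2 ∨ (1/4 ≤ Γ^[n] y ∧ Γ^[n] y ≤ 5/12) := by
    intro y h1 h2
    rcases eq_or_lt_of_le h2 with he | h2
    · exact ⟨0, Or.inl he⟩
    have useA : ∀ z : ℝ, 5/12 < z → z < 1/2 →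
        ∃ n : ℕ, Γ^[n] z = 1/2 ∨ (1/4 ≤ Γ^[n] z ∧ Γ^[n] z ≤ 5/12) := by
      intro z hz1 hz2
      obtain ⟨N, hN⟩ := pow_unbounded_of_one_lt ((1/12)/(1/2 - z)) (by norm_num : (1:ℝ) < 3)
      refine hA N z hz1 hz2 ?_
      have hpos : (0:ℝ) < 1/2 - z := by linarith
      rw [div_lt_iff₀ hpos] at hN
      linarith
    by_cases hc : y ≤ 5/12
    · by_cases hc4 : 1/4 ≤ y
      · exact ⟨0, Or.inr ⟨hc4, hc⟩⟩
      · -- 1/6 < y < 1/4 : Γ y = 1 - 3y ∈ (1/4, 1/2)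
        have hΓy : Γ y = 1 - 3*y := by
          rw [hΓ y, if_neg (by linarith), abs_of_nonpos (by linarith)]; ring
        push_neg at hc4
        by_cases hc5 : Γ y ≤ 5/12
        · exact ⟨1, Or.inr ⟨by rw [Function.iterate_one, hΓy]; linarith,
            by rwa [Function.iterate_one]⟩⟩
        · push_neg at hc5
          obtain ⟨n, hn⟩ := useA (Γ y) hc5 (by rw [hΓy]; linarith)
          exact ⟨n+1, by rwa [Function.iterate_succ_apply]⟩
    · push_neg at hc
      exact useA y hc h2
  -- Main: triple until exceeding 1/6
  have hB : ∀ N : ℕ, ∀ x : ℝ, 0 < x → x ≤ 1/2 → 1/6 < 3^N * x →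
      ∃ n : ℕ, Γ^[n] x = 1/2 ∨ (1/4 ≤ Γ^[n] x ∧ Γ^[n] x ≤ 5/12) := by
    intro N
    induction N with
    | zero => intro x hx0 hx2 hx6; norm_num at hx6; exact hC x hx6 hx2
    | succ N ih =>
      intro x hx0 hx2 hx6
      by_cases hs : x ≤ 1/6
      · rcases eq_or_lt_of_le hs with he | hs'
        · exact ⟨1, Or.inl (by rw [Function.iterate_one, hΓ x, if_pos hs, he]; norm_num)⟩
        · have hΓx : Γ x = 3*x := by rw [hΓ x, if_pos hs]
          have h6 : 1/6 < 3^N * (3*x) := by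
            have : (3:ℝ)^N * (3*x) = 3^(N+1) * x := by ring
            linarith [this ▸ hx6]
          obtain ⟨n, hn⟩ := ih (Γ x) (by rw [hΓx]; linarith) (by rw [hΓx]; linarith)
            (by rw [hΓx]; exact h6)
          exact ⟨n+1, by rwa [Function.iterate_succ_apply]⟩
      · push_neg at hs
        exact hC x hs hx2
  intro x hx0 hx2
  obtain ⟨N, hN⟩ := pow_unbounded_of_one_lt ((1/6)/x) (by norm_num : (1:ℝ) < 3)
  refine hB N x hx0 hx2 ?_
  rw [div_lt_iff₀ hx0] at hN
  linarith
end
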